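/- arXiv:1901.09254 — 2 statements merged into one kernel-verified Lean document; each statement's English description precedes it below -/
import Mathlib

section
/- Let U ∈ B(X) and V ∈ B(Y) be bounded Banach space operators and suppose U and V are Fredholm with dim ker U = dim ker V and dim coker U = dim coker V. Then U and V are equivalent after extension. -/
open ContinuousLinearMap

universe u

/-- A witness that `U ⊕ I_{X₀} = E (V ⊕ I_{Y₀}) F` with `E`, `F` invertible. -/
structure EAEWitness {X Y : Type u}
    [NormedAddCommGroup X] [NormedSpace ℂ X]
    [NormedAddCommGroup Y] [NormedSpace ℂ Y]
    (U : X →L[ℂ] X) (V : Y →L[ℂ] Y) : Type (u + 1) where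
  X₀ : Type u
  Y₀ : Type u
  [instNX : NormedAddCommGroup X₀]
  [instSX : NormedSpace ℂ X₀]
  [instCX : CompleteSpace X₀]
  [instNY : NormedAddCommGroup Y₀]
  [instSY : NormedSpace ℂ Y₀]
  [instCY : CompleteSpace Y₀]
  E : (Y × Y₀) ≃L[ℂ] (X × X₀)
  F : (X × X₀) ≃L[ℂ] (Y × Y₀)
  eq : U.prodMap (ContinuousLinearMap.id ℂ X₀) =
    (E : (Y × Y₀) →L[ℂ] (X × X₀)) ∘L (V.prodMap (ContinuousLinearMap.id ℂ Y₀)) ∘L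
      (F : (X × X₀) →L[ℂ] (Y × Y₀))

/-- `U` and `V` are *equivalent after extension*. -/
def EAE {X Y : Type u}
    [NormedAddCommGroup X] [NormedSpace ℂ X]
    [NormedAddCommGroup Y] [NormedSpace ℂ Y]
    (U : X →L[ℂ] X) (V : Y →L[ℂ] Y) : Prop :=
  Nonempty (EAEWitness U V)

/-- A bounded operator is *Fredholm* if it has finite dimensional kernel and
closed range of finite codimension. -/
def IsFredholm {X Y : Type u} [NormedAddCommGroup X] [NormedSpace ℂ X]
    [NormedAddCommGroup Y] [NormedSpace ℂ Y] (T : X →L[ℂ] Y) : Prop :=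
  FiniteDimensional ℂ (LinearMap.ker (T : X →ₗ[ℂ] Y)) ∧ IsClosed (LinearMap.range (T : X →ₗ[ℂ] Y) : Set Y) ∧
    FiniteDimensional ℂ (Y ⧸ LinearMap.range (T : X →ₗ[ℂ] Y))

/-!
Up to invertible factors on both sides, a Fredholm operator `T` on a Banach space `Z` is
`I_{Z₁} ⊕ 0 : Z₁ × ker T → Z₁ × N`, where `Z₁` is a closed complement of `ker T` (Hahn–Banach)
and `N` one of `range T`: by the open mapping theorem `T` maps `Z₁` isomorphically onto the closed
subspace `range T`. Hence `U ⊕ I_Y` is equivalent to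
`I_{X₁ × Y} ⊕ 0_{ker U → N_U}` and `V ⊕ I_X` to `I_{Y₁ × X} ⊕ 0_{ker V → N_V}`. The zero parts are
equivalent since kernels and cokernels have equal finite dimensions, and the identity parts since
`X₁ × Y ≅ X₁ × Y₁ × ker V ≅ Y₁ × X₁ × ker U ≅ Y₁ × X`.
-/

namespace ContinuousLinearEquiv

variable (R A B C : Type*) [Semiring R]
  [TopologicalSpace A] [AddCommMonoid A] [Module R A]
  [TopologicalSpace B] [AddCommMonoid B] [Module R B]
  [TopologicalSpace C] [AddCommMonoid C] [Module R C]

def prodRightComm : ((A × B) × C) ≃L[R] (A × C) × B :=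
  (prodAssoc R A B C).trans <|
    ((ContinuousLinearEquiv.refl R A).prodCongr (prodComm R B C)).trans (prodAssoc R A C B).symm

end ContinuousLinearEquiv

namespace ContinuousLinearMap

variable {R : Type*} [Semiring R] {E E' F F' G G' H H' : Type*}
  [TopologicalSpace E] [AddCommMonoid E] [Module R E]
  [TopologicalSpace E'] [AddCommMonoid E'] [Module R E']
  [TopologicalSpace F] [AddCommMonoid F] [Module R F]
  [TopologicalSpace F'] [AddCommMonoid F'] [Module R F']
  [TopologicalSpace G] [AddCommMonoid G] [Module R G]
  [TopologicalSpace G'] [AddCommMonoid G'] [Module R G']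
  [TopologicalSpace H] [AddCommMonoid H] [Module R H]
  [TopologicalSpace H'] [AddCommMonoid H'] [Module R H']

def Equivalent (T : E →L[R] E') (S : F →L[R] F') : Prop :=
  ∃ (e : F' ≃L[R] E') (f : E ≃L[R] F), T = (e : F' →L[R] E') ∘L S ∘L (f : E →L[R] F)

namespace Equivalent

@[refl]
theorem refl (T : E →L[R] E') : T.Equivalent T :=
  ⟨.refl R E', .refl R E, rfl⟩

@[symm]
theorem symm {T : E →L[R] E'} {S : F →L[R] F'} (h : T.Equivalent S) : S.Equivalent T := by
  obtain ⟨e, f, rfl⟩ := h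
  refine ⟨e.symm, f.symm, ?_⟩
  ext x
  simp

@[trans]
theorem trans {T : E →L[R] E'} {S : F →L[R] F'} {Q : G →L[R] G'}
    (hTS : T.Equivalent S) (hSQ : S.Equivalent Q) : T.Equivalent Q := by
  obtain ⟨e, f, rfl⟩ := hTS
  obtain ⟨e', f', rfl⟩ := hSQ
  exact ⟨e'.trans e, f.trans f', rfl⟩

theorem prodMap {T : E →L[R] E'} {S : F →L[R] F'} {T' : G →L[R] G'} {S' : H →L[R] H'}
    (h : T.Equivalent S) (h' : T'.Equivalent S') :
    (T.prodMap T').Equivalent (S.prodMap S') := by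
  obtain ⟨e, f, rfl⟩ := h
  obtain ⟨e', f', rfl⟩ := h'
  exact ⟨e.prodCongr e', f.prodCongr f', rfl⟩

theorem prodMap_right_comm (T : E →L[R] E') (S : F →L[R] F') (Q : G →L[R] G') :
    ((T.prodMap S).prodMap Q).Equivalent ((T.prodMap Q).prodMap S) :=
  ⟨.prodRightComm R E' G' F', .prodRightComm R E F G, rfl⟩

theorem prodMap_id {A K N : Type*}
    [TopologicalSpace A] [AddCommMonoid A] [Module R A]
    [TopologicalSpace K] [AddCommMonoid K] [Module R K]
    [TopologicalSpace N] [AddCommMonoid N] [Module R N]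
    {T : E →L[R] E'} {Z : K →L[R] N} (h : T.Equivalent ((ContinuousLinearMap.id R A).prodMap Z))
    (W : Type*) [TopologicalSpace W] [AddCommMonoid W] [Module R W] :
    (T.prodMap (ContinuousLinearMap.id R W)).Equivalent
      ((ContinuousLinearMap.id R (A × W)).prodMap Z) :=
  (h.prodMap (.refl _)).trans (prodMap_right_comm _ _ _)

end Equivalent

theorem _root_.ContinuousLinearEquiv.coe_equivalent_id (e : E ≃L[R] F) :
    (e : E →L[R] F).Equivalent (ContinuousLinearMap.id R E) :=
  ⟨e, .refl R E, rfl⟩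

theorem id_equivalent_id (e : E ≃L[R] F) :
    (ContinuousLinearMap.id R E).Equivalent (ContinuousLinearMap.id R F) :=
  ⟨e.symm, e, by ext x; simp⟩

theorem zero_equivalent_zero (e : E ≃L[R] F) (e' : E' ≃L[R] F') :
    (0 : E →L[R] E').Equivalent (0 : F →L[R] F') :=
  ⟨e'.symm, e, by ext x; simp⟩

theorem id_prod_equivalent_id_prod {A B K : Type*}
    [TopologicalSpace A] [AddCommMonoid A] [Module R A]
    [TopologicalSpace B] [AddCommMonoid B] [Module R B]
    [TopologicalSpace K] [AddCommMonoid K] [Module R K]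
    (eE : E ≃L[R] A × K) (eF : F ≃L[R] B × K) :
    (ContinuousLinearMap.id R (A × F)).Equivalent (ContinuousLinearMap.id R (B × E)) :=
  id_equivalent_id <| ((ContinuousLinearEquiv.refl R A).prodCongr eF).trans <|
    (ContinuousLinearEquiv.prodAssoc R A B K).symm.trans <|
    ((ContinuousLinearEquiv.prodComm R A B).prodCongr (.refl R K)).trans <|
    (ContinuousLinearEquiv.prodAssoc R B A K).trans
      ((ContinuousLinearEquiv.refl R B).prodCongr eE.symm)

end ContinuousLinearMap

section FredholmPackage

variable {𝕜 E F : Type*} [NontriviallyNormedField 𝕜] [AddCommGroup E] [AddCommGroup F]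
  [Module 𝕜 E] [Module 𝕜 F] [TopologicalSpace E] [TopologicalSpace F]

noncomputable def FredholmDecomposition.prodEquiv [IsTopologicalAddGroup E]
    (dec : FredholmDecomposition 𝕜 E) : E ≃L[𝕜] dec.X₁ × dec.X₀ :=
  (Submodule.prodEquivOfIsTopCompl _ _ dec.isTopCompl).symm

namespace ContinuousLinearMap.FredholmPackage

variable {u : E →L[𝕜] F}

theorem finrank_decDom_X₀ (pkg : FredholmPackage u) :
    Module.finrank 𝕜 pkg.decDom.X₀ =
      Module.finrank 𝕜 (LinearMap.ker (u : E →ₗ[𝕜] F)) := by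
  rw [pkg.ker_eq]

theorem finrank_decCodom_X₀ (pkg : FredholmPackage u) :
    Module.finrank 𝕜 pkg.decCodom.X₀ =
      Module.finrank 𝕜 (F ⧸ LinearMap.range (u : E →ₗ[𝕜] F)) :=
  ((Submodule.quotEquivOfEq _ _ pkg.range_eq).trans
    (Submodule.quotientEquivOfIsCompl _ _ pkg.decCodom.isTopCompl.isCompl)).finrank_eq.symm

theorem equivalent_id_prodMap_zero [IsTopologicalAddGroup E] [IsTopologicalAddGroup F]
    (pkg : FredholmPackage u) :
    u.Equivalent ((ContinuousLinearMap.id 𝕜 pkg.decDom.X₁).prodMap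
      (0 : pkg.decDom.X₀ →L[𝕜] pkg.decCodom.X₀)) := by
  have hu : u.Equivalent ((pkg.equiv : pkg.decDom.X₁ →L[𝕜] pkg.decCodom.X₁).prodMap
      (0 : pkg.decDom.X₀ →L[𝕜] pkg.decCodom.X₀)) := by
    refine ⟨pkg.decCodom.prodEquiv.symm, pkg.decDom.prodEquiv, ?_⟩
    ext x
    simp [pkg.eq_equiv, FredholmDecomposition.prodEquiv,
      Submodule.prodEquivOfIsTopCompl_symm_apply, Submodule.prodEquivOfIsTopCompl_apply]
  exact hu.trans (pkg.equiv.coe_equivalent_id.prodMap (.refl _))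

end ContinuousLinearMap.FredholmPackage

end FredholmPackage

theorem ContinuousLinearMap.isStrictMap_of_isClosed_range {𝕜 E F : Type*}
    [NontriviallyNormedField 𝕜] [NormedAddCommGroup E] [NormedSpace 𝕜 E] [CompleteSpace E]
    [NormedAddCommGroup F] [NormedSpace 𝕜 F] [CompleteSpace F] {T : E →L[𝕜] F}
    (hT : IsClosed (T.range : Set F)) : Topology.IsStrictMap T := by
  have : CompleteSpace T.range := hT.completeSpace_coe
  have hsurj := T.toLinearMap.surjective_rangeRestrict
  exact (LinearMap.isStrictMap_iff_isOpenQuotientMap_rangeRestrict (f := T.toLinearMap)).2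
    ⟨hsurj, T.rangeRestrict.continuous, T.rangeRestrict.isOpenMap hsurj⟩

theorem IsFredholm.isFredholm {X Y : Type u}
    [NormedAddCommGroup X] [NormedSpace ℂ X] [CompleteSpace X]
    [NormedAddCommGroup Y] [NormedSpace ℂ Y] [CompleteSpace Y] {T : X →L[ℂ] Y}
    (hT : _root_.IsFredholm T) : T.IsFredholm :=
  have : FiniteDimensional ℂ (LinearMap.ker (T : X →ₗ[ℂ] Y)) := hT.1
  { isStrictMap := T.isStrictMap_of_isClosed_range hT.2.1
    isClosed_range := hT.2.1
    finite_ker := hT.1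
    finite_coker := hT.2.2
    closedComplemented_ker := .of_finiteDimensional _ }

/-- Fredholm operators with equal kernel dimensions and equal cokernel dimensions
are equivalent after extension. -/
theorem fredholm_eae
    {X Y : Type u} [NormedAddCommGroup X] [NormedSpace ℂ X] [CompleteSpace X]
    [NormedAddCommGroup Y] [NormedSpace ℂ Y] [CompleteSpace Y]
    (U : X →L[ℂ] X) (V : Y →L[ℂ] Y)
    (hU : _root_.IsFredholm U) (hV : _root_.IsFredholm V)
    (hker : Module.finrank ℂ (LinearMap.ker (U : X →ₗ[ℂ] X)) = Module.finrank ℂ (LinearMap.ker (V : Y →ₗ[ℂ] Y)))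
    (hcoker : Module.finrank ℂ (X ⧸ LinearMap.range (U : X →ₗ[ℂ] X)) =
      Module.finrank ℂ (Y ⧸ LinearMap.range (V : Y →ₗ[ℂ] Y))) :
    EAE U V := by
  obtain ⟨pU⟩ := hU.isFredholm.nonempty_fredholmPackage
  obtain ⟨pV⟩ := hV.isFredholm.nonempty_fredholmPackage
  have := pU.decDom.finite_X₀
  have := pV.decDom.finite_X₀
  have := pU.decCodom.finite_X₀
  have := pV.decCodom.finite_X₀
  let κ : pV.decDom.X₀ ≃L[ℂ] pU.decDom.X₀ :=
    .ofFinrankEq (by rw [pU.finrank_decDom_X₀, pV.finrank_decDom_X₀, hker])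
  let ν : pU.decCodom.X₀ ≃L[ℂ] pV.decCodom.X₀ :=
    .ofFinrankEq (by rw [pU.finrank_decCodom_X₀, pV.finrank_decCodom_X₀, hcoker])
  have hid := id_prod_equivalent_id_prod pU.decDom.prodEquiv
    (pV.decDom.prodEquiv.trans ((ContinuousLinearEquiv.refl ℂ _).prodCongr κ))
  obtain ⟨E, F, h⟩ : (U.prodMap (ContinuousLinearMap.id ℂ Y)).Equivalent
      (V.prodMap (ContinuousLinearMap.id ℂ X)) :=
    ((pU.equivalent_id_prodMap_zero.prodMap_id Y).trans
      (hid.prodMap (zero_equivalent_zero κ.symm ν))).trans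
      (pV.equivalent_id_prodMap_zero.prodMap_id X).symm
  exact ⟨⟨Y, X, E, F, h⟩⟩
end

section
/- Let U ∈ B(X) and V ∈ B(Y) be generalized invertible operators with decompositions U = U' ⊕ 0 : X₁ ⊕ X₂ → X₁' ⊕ X₂' and V = V' ⊕ 0 : Y₁ ⊕ Y₂ → Y₁' ⊕ Y₂' (U', V' invertible). If X₂ ≅ Y₂ and X₂' ≅ Y₂' and additionally X₂ ≅ X₂' (so all four kernel/cokernel spaces are mutually isomorphic), then U and V are Schur coupled. -/
/-!
Write `A = U' ⊕ e` and `D = V' ⊕ f` with respect to the given decompositions, where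
`e : X₂ ≅ X₂'` and `f : Y₂ ≅ Y₂'`, and let `B = 0 ⊕ g`, `C = 0 ⊕ h` with `h : X₂ ≅ Y₂'` and
`g = e h⁻¹ f`. All operators are block diagonal, so the Schur complements are computed blockwise:
on the first blocks `U' - 0 = U'` and `V' - 0 = V'`, and on the second blocks
`e - g f⁻¹ h = 0` and `f - h e⁻¹ g = 0`.
-/

open ContinuousLinearMap

/-- `U` and `V` are *Schur coupled* if they arise as the two Schur complements of a
`2 × 2` block operator on `X × Y` with invertible diagonal entries. -/
def SchurCoupled {X Y : Type*} [NormedAddCommGroup X] [NormedSpace ℂ X]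
    [NormedAddCommGroup Y] [NormedSpace ℂ Y]
    (U : X →L[ℂ] X) (V : Y →L[ℂ] Y) : Prop :=
  ∃ (A : X ≃L[ℂ] X) (D : Y ≃L[ℂ] Y) (B : Y →L[ℂ] X) (C : X →L[ℂ] Y),
    U = (A : X →L[ℂ] X) - B ∘L (D.symm : Y →L[ℂ] Y) ∘L C ∧
    V = (D : Y →L[ℂ] Y) - C ∘L (A.symm : X →L[ℂ] X) ∘L B

section BlockDiagonal

variable {R : Type*} [Ring R]
  {X X₁ X₂ Y Y₁ Y₂ Z Z₁ Z₂ : Type*}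
  [TopologicalSpace X] [AddCommGroup X] [Module R X]
  [TopologicalSpace X₁] [AddCommGroup X₁] [Module R X₁]
  [TopologicalSpace X₂] [AddCommGroup X₂] [Module R X₂]
  [TopologicalSpace Y] [AddCommGroup Y] [Module R Y]
  [TopologicalSpace Y₁] [AddCommGroup Y₁] [Module R Y₁]
  [TopologicalSpace Y₂] [AddCommGroup Y₂] [Module R Y₂]
  [TopologicalSpace Z] [AddCommGroup Z] [Module R Z]
  [TopologicalSpace Z₁] [AddCommGroup Z₁] [Module R Z₁]
  [TopologicalSpace Z₂] [AddCommGroup Z₂] [Module R Z₂]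

def blockDiag (i : X ≃L[R] X₁ × X₂) (j : Y ≃L[R] Y₁ × Y₂)
    (T₁ : X₁ →L[R] Y₁) (T₂ : X₂ →L[R] Y₂) : X →L[R] Y :=
  (j.symm : Y₁ × Y₂ →L[R] Y) ∘L T₁.prodMap T₂ ∘L (i : X →L[R] X₁ × X₂)

def blockDiagEquiv (i : X ≃L[R] X₁ × X₂) (j : Y ≃L[R] Y₁ × Y₂)
    (E₁ : X₁ ≃L[R] Y₁) (E₂ : X₂ ≃L[R] Y₂) : X ≃L[R] Y :=
  i.trans ((E₁.prodCongr E₂).trans j.symm)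

theorem coe_blockDiagEquiv (i : X ≃L[R] X₁ × X₂) (j : Y ≃L[R] Y₁ × Y₂)
    (E₁ : X₁ ≃L[R] Y₁) (E₂ : X₂ ≃L[R] Y₂) :
    (blockDiagEquiv i j E₁ E₂ : X →L[R] Y) = blockDiag i j E₁ E₂ :=
  rfl

theorem blockDiagEquiv_symm (i : X ≃L[R] X₁ × X₂) (j : Y ≃L[R] Y₁ × Y₂)
    (E₁ : X₁ ≃L[R] Y₁) (E₂ : X₂ ≃L[R] Y₂) :
    (blockDiagEquiv i j E₁ E₂).symm = blockDiagEquiv j i E₁.symm E₂.symm :=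
  rfl

theorem blockDiag_comp_blockDiag (i : X ≃L[R] X₁ × X₂) (j : Y ≃L[R] Y₁ × Y₂)
    (k : Z ≃L[R] Z₁ × Z₂) (S₁ : Y₁ →L[R] Z₁) (S₂ : Y₂ →L[R] Z₂)
    (T₁ : X₁ →L[R] Y₁) (T₂ : X₂ →L[R] Y₂) :
    blockDiag j k S₁ S₂ ∘L blockDiag i j T₁ T₂ = blockDiag i k (S₁ ∘L T₁) (S₂ ∘L T₂) := by
  ext x
  simp [blockDiag, Prod.map_map, coe_comp]

variable [IsTopologicalAddGroup Y] [IsTopologicalAddGroup Y₁] [IsTopologicalAddGroup Y₂]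

theorem blockDiag_sub_blockDiag (i : X ≃L[R] X₁ × X₂) (j : Y ≃L[R] Y₁ × Y₂)
    (T₁ S₁ : X₁ →L[R] Y₁) (T₂ S₂ : X₂ →L[R] Y₂) :
    blockDiag i j T₁ T₂ - blockDiag i j S₁ S₂ = blockDiag i j (T₁ - S₁) (T₂ - S₂) := by
  ext x
  simp only [blockDiag, sub_apply, comp_apply, ← map_sub]
  rfl

end BlockDiagonal

theorem schurCoupled_blockDiag_zero
    {X Y X₁ X₂ X₁' X₂' Y₁ Y₂ Y₁' Y₂' : Type*}
    [NormedAddCommGroup X] [NormedSpace ℂ X] [NormedAddCommGroup Y] [NormedSpace ℂ Y]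
    [NormedAddCommGroup X₁] [NormedSpace ℂ X₁] [NormedAddCommGroup X₂] [NormedSpace ℂ X₂]
    [NormedAddCommGroup X₁'] [NormedSpace ℂ X₁'] [NormedAddCommGroup X₂'] [NormedSpace ℂ X₂']
    [NormedAddCommGroup Y₁] [NormedSpace ℂ Y₁] [NormedAddCommGroup Y₂] [NormedSpace ℂ Y₂]
    [NormedAddCommGroup Y₁'] [NormedSpace ℂ Y₁'] [NormedAddCommGroup Y₂'] [NormedSpace ℂ Y₂']
    (iX : X ≃L[ℂ] X₁ × X₂) (iX' : X ≃L[ℂ] X₁' × X₂')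
    (iY : Y ≃L[ℂ] Y₁ × Y₂) (iY' : Y ≃L[ℂ] Y₁' × Y₂')
    (U' : X₁ ≃L[ℂ] X₁') (V' : Y₁ ≃L[ℂ] Y₁')
    (e : X₂ ≃L[ℂ] X₂') (f : Y₂ ≃L[ℂ] Y₂') (h : X₂ ≃L[ℂ] Y₂') :
    SchurCoupled (blockDiag iX iX' U' 0) (blockDiag iY iY' V' 0) := by
  set g : Y₂ ≃L[ℂ] X₂' := f.trans (h.symm.trans e)
  have hg : (g : Y₂ →L[ℂ] X₂') ∘L (f.symm : Y₂' →L[ℂ] Y₂) ∘L (h : X₂ →L[ℂ] Y₂') = e := by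
    ext x
    simp [g]
  have hh : (h : X₂ →L[ℂ] Y₂') ∘L (e.symm : X₂' →L[ℂ] X₂) ∘L (g : Y₂ →L[ℂ] X₂') = f := by
    ext y
    simp [g]
  refine ⟨blockDiagEquiv iX iX' U' e, blockDiagEquiv iY iY' V' f,
    blockDiag iY iX' 0 g, blockDiag iX iY' 0 h, ?_, ?_⟩
  · rw [coe_blockDiagEquiv, blockDiagEquiv_symm, coe_blockDiagEquiv, blockDiag_comp_blockDiag,
      blockDiag_comp_blockDiag, blockDiag_sub_blockDiag, hg]
    simp
  · rw [coe_blockDiagEquiv, blockDiagEquiv_symm, coe_blockDiagEquiv, blockDiag_comp_blockDiag,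
      blockDiag_comp_blockDiag, blockDiag_sub_blockDiag, hh]
    simp

theorem schur_coupled_of_isomorphic_kernels_cokernels_general
    {X Y X₁ X₂ X₁' X₂' Y₁ Y₂ Y₁' Y₂' : Type*}
    [NormedAddCommGroup X] [NormedSpace ℂ X]
    [NormedAddCommGroup Y] [NormedSpace ℂ Y]
    [NormedAddCommGroup X₁] [NormedSpace ℂ X₁]
    [NormedAddCommGroup X₂] [NormedSpace ℂ X₂]
    [NormedAddCommGroup X₁'] [NormedSpace ℂ X₁']
    [NormedAddCommGroup X₂'] [NormedSpace ℂ X₂']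
    [NormedAddCommGroup Y₁] [NormedSpace ℂ Y₁]
    [NormedAddCommGroup Y₂] [NormedSpace ℂ Y₂]
    [NormedAddCommGroup Y₁'] [NormedSpace ℂ Y₁']
    [NormedAddCommGroup Y₂'] [NormedSpace ℂ Y₂']
    (iX : X ≃L[ℂ] (X₁ × X₂)) (iX' : X ≃L[ℂ] (X₁' × X₂'))
    (iY : Y ≃L[ℂ] (Y₁ × Y₂)) (iY' : Y ≃L[ℂ] (Y₁' × Y₂'))
    (U' : X₁ ≃L[ℂ] X₁') (V' : Y₁ ≃L[ℂ] Y₁')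
    (U : X →L[ℂ] X) (V : Y →L[ℂ] Y)
    (hU : U = (iX'.symm : (X₁' × X₂') →L[ℂ] X) ∘L
      ((U' : X₁ →L[ℂ] X₁').prodMap (0 : X₂ →L[ℂ] X₂')) ∘L (iX : X →L[ℂ] (X₁ × X₂)))
    (hV : V = (iY'.symm : (Y₁' × Y₂') →L[ℂ] Y) ∘L
      ((V' : Y₁ →L[ℂ] Y₁').prodMap (0 : Y₂ →L[ℂ] Y₂')) ∘L (iY : Y →L[ℂ] (Y₁ × Y₂)))
    (e₂ : X₂ ≃L[ℂ] Y₂) (e₂' : X₂' ≃L[ℂ] Y₂') (e : X₂ ≃L[ℂ] X₂') :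
    SchurCoupled U V := by
  subst hU hV
  exact schurCoupled_blockDiag_zero iX iX' iY iY' U' V' e (e₂.symm.trans (e.trans e₂'))
    (e.trans e₂')

/-- Generalized invertible operators `U = U' ⊕ 0 : X₁ ⊕ X₂ → X₁' ⊕ X₂'` and
`V = V' ⊕ 0 : Y₁ ⊕ Y₂ → Y₁' ⊕ Y₂'` with mutually isomorphic kernels and cokernels
`X₂ ≅ Y₂`, `X₂' ≅ Y₂'` and `X₂ ≅ X₂'` are Schur coupled. -/
theorem schur_coupled_of_isomorphic_kernels_cokernels
    {X Y X₁ X₂ X₁' X₂' Y₁ Y₂ Y₁' Y₂' : Type*}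
    [NormedAddCommGroup X] [NormedSpace ℂ X] [CompleteSpace X]
    [NormedAddCommGroup Y] [NormedSpace ℂ Y] [CompleteSpace Y]
    [NormedAddCommGroup X₁] [NormedSpace ℂ X₁] [CompleteSpace X₁]
    [NormedAddCommGroup X₂] [NormedSpace ℂ X₂] [CompleteSpace X₂]
    [NormedAddCommGroup X₁'] [NormedSpace ℂ X₁'] [CompleteSpace X₁']
    [NormedAddCommGroup X₂'] [NormedSpace ℂ X₂'] [CompleteSpace X₂']
    [NormedAddCommGroup Y₁] [NormedSpace ℂ Y₁] [CompleteSpace Y₁]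
    [NormedAddCommGroup Y₂] [NormedSpace ℂ Y₂] [CompleteSpace Y₂]
    [NormedAddCommGroup Y₁'] [NormedSpace ℂ Y₁'] [CompleteSpace Y₁']
    [NormedAddCommGroup Y₂'] [NormedSpace ℂ Y₂'] [CompleteSpace Y₂']
    (iX : X ≃L[ℂ] (X₁ × X₂)) (iX' : X ≃L[ℂ] (X₁' × X₂'))
    (iY : Y ≃L[ℂ] (Y₁ × Y₂)) (iY' : Y ≃L[ℂ] (Y₁' × Y₂'))
    (U' : X₁ ≃L[ℂ] X₁') (V' : Y₁ ≃L[ℂ] Y₁')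
    (U : X →L[ℂ] X) (V : Y →L[ℂ] Y)
    (hU : U = (iX'.symm : (X₁' × X₂') →L[ℂ] X) ∘L
      ((U' : X₁ →L[ℂ] X₁').prodMap (0 : X₂ →L[ℂ] X₂')) ∘L (iX : X →L[ℂ] (X₁ × X₂)))
    (hV : V = (iY'.symm : (Y₁' × Y₂') →L[ℂ] Y) ∘L
      ((V' : Y₁ →L[ℂ] Y₁').prodMap (0 : Y₂ →L[ℂ] Y₂')) ∘L (iY : Y →L[ℂ] (Y₁ × Y₂)))
    (e₂ : X₂ ≃L[ℂ] Y₂) (e₂' : X₂' ≃L[ℂ] Y₂') (e : X₂ ≃L[ℂ] X₂') :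
    SchurCoupled U V :=
  schur_coupled_of_isomorphic_kernels_cokernels_general iX iX' iY iY' U' V' U V hU hV e₂ e₂' e
end
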